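/- Let Y be a real random variable with all moments finite, (Y_j)_{j≥1} mutually independent copies of Y, S_0 = 0, S_k = Y_1 + ⋯ + Y_k. For all integers n ≥ k ≥ 0, the probabilistic degenerate Stirling number of the second kind associated with Y equals the partial Bell polynomial evaluated at the degenerate moments of Y: {n ⎨ k}_{Y,λ} = B_{n,k}(E[(Y)_{1,λ}], E[(Y)_{2,λ}], …, E[(Y)_{n−k+1,λ}]). -/

import Mathlib

open MeasureTheory ProbabilityTheory Finset

/-- The degenerate falling factorial `(x)_{n,lam} = prod_{j=0}^{n-1} (x - j*lam)`. -/
noncomputable def degFallingFactorial (lam : ℝ) (n : ℕ) (x : ℝ) : ℝ :=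
  ∏ j ∈ Finset.range n, (x - j * lam)

/-- The partial sums `S_k = Y_0 + ⋯ + Y_{k-1}` (so `S_0 = 0`). -/
noncomputable def partialSum {Ω : Type*} (Y : ℕ → Ω → ℝ) (k : ℕ) (ω : Ω) : ℝ :=
  ∑ j ∈ Finset.range k, Y j ω

/-- The probabilistic degenerate Stirling numbers of the second kind associated with `Y`. -/
noncomputable def probDegStirling2 {Ω : Type*} [MeasurableSpace Ω] (μ : Measure Ω)
    (Y : ℕ → Ω → ℝ) (lam : ℝ) (n k : ℕ) : ℝ :=
  (1 / k.factorial : ℝ) *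
    ∑ j ∈ Finset.range (k + 1),
      (-1 : ℝ) ^ (k - j) * k.choose j * ∫ ω, degFallingFactorial lam n (partialSum Y j ω) ∂μ

/-- The partial Bell polynomials `B_{n,k}(x_1, …, x_{n-k+1})`. -/
noncomputable def partialBell (n k : ℕ) (x : ℕ → ℝ) : ℝ :=
  ∑ l ∈ Finset.filter
      (fun l : Fin (n - k + 1) → ℕ =>
        (∑ i, l i) = k ∧ (∑ i, (i.1 + 1) * l i) = n)
      (Fintype.piFinset fun _ => Finset.range (n + 1)),
    (n.factorial : ℝ) / (∏ i, ((l i).factorial : ℝ)) *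
      ∏ i, (x (i.1 + 1) / (i.1 + 1).factorial) ^ l i

lemma degFF_zero (lam : ℝ) (x : ℝ) : degFallingFactorial lam 0 x = 1 := by
  simp [degFallingFactorial]

lemma degFF_succ (lam : ℝ) (n : ℕ) (x : ℝ) :
    degFallingFactorial lam (n + 1) x = degFallingFactorial lam n x * (x - n * lam) :=
  Finset.prod_range_succ _ _

lemma degFF_add (lam x y : ℝ) (n : ℕ) :
    degFallingFactorial lam n (x + y) =
      ∑ ij ∈ Finset.HasAntidiagonal.antidiagonal n, (n.choose ij.1 : ℝ) *
        (degFallingFactorial lam ij.1 x * degFallingFactorial lam ij.2 y) := by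
  induction n with
  | zero => simp [degFallingFactorial]
  | succ n ih =>
    rw [degFF_succ, ih, Finset.sum_antidiagonal_choose_succ_mul
      (fun i j => degFallingFactorial lam i x * degFallingFactorial lam j y) n,
      Finset.sum_mul, ← Finset.sum_add_distrib]
    refine Finset.sum_congr rfl fun ij hij => ?_
    have hsum : ij.1 + ij.2 = n := Finset.HasAntidiagonal.mem_antidiagonal.mp hij
    have hch : (n.choose ij.2 : ℝ) = (n.choose ij.1 : ℝ) := by
      rw [Nat.choose_symm_of_eq_add hsum.symm]
    rw [hch, degFF_succ, degFF_succ]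
    have hn : (n : ℝ) = (ij.1 : ℝ) + (ij.2 : ℝ) := by
      rw [← hsum]; push_cast; ring
    rw [hn]; ring

lemma degFF_measurable (lam : ℝ) (m : ℕ) : Measurable (degFallingFactorial lam m) :=
  Finset.measurable_prod _ fun j _ => measurable_id.sub_const _

lemma degFF_integrable {Ω : Type*} [MeasurableSpace Ω] {μ : Measure Ω}
    {X : Ω → ℝ} (hX : Measurable X) (hmom : ∀ m : ℕ, Integrable (fun ω => |X ω| ^ m) μ)
    (lam : ℝ) (m : ℕ) :
    Integrable (fun ω => degFallingFactorial lam m (X ω)) μ := by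
  have hg : Integrable (fun ω => (|X ω| + m * |lam|) ^ m) μ := by
    have he : (fun ω => (|X ω| + m * |lam|) ^ m)
        = fun ω => ∑ i ∈ Finset.range (m + 1),
            |X ω| ^ i * (m * |lam|) ^ (m - i) * (m.choose i) := by
      funext ω; rw [add_pow]
    rw [he]
    exact integrable_finset_sum _ fun i _ => ((hmom i).mul_const _).mul_const _
  refine hg.mono' ((degFF_measurable lam m).comp hX).aestronglyMeasurable ?_
  filter_upwards with ω
  rw [Real.norm_eq_abs]
  calc |degFallingFactorial lam m (X ω)|
      = ∏ j ∈ Finset.range m, |X ω - j * lam| := by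
        rw [degFallingFactorial, Finset.abs_prod]
    _ ≤ ∏ _j ∈ Finset.range m, (|X ω| + m * |lam|) := by
        refine Finset.prod_le_prod (fun _ _ => abs_nonneg _) (fun j hj => ?_)
        have h1 : |X ω - (j : ℝ) * lam| ≤ |X ω| + |(j : ℝ) * lam| := by
          rw [sub_eq_add_neg]
          exact (abs_add_le _ _).trans (by rw [abs_neg])
        refine h1.trans ?_
        have : |(j : ℝ) * lam| = (j : ℝ) * |lam| := by
          rw [abs_mul, Nat.abs_cast]
        rw [this]
        have hj' : (j : ℝ) ≤ m := by
          exact_mod_cast (Finset.mem_range.mp hj).le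
        have := mul_le_mul_of_nonneg_right hj' (abs_nonneg lam)
        linarith
    _ = (|X ω| + m * |lam|) ^ m := by rw [Finset.prod_const, Finset.card_range]

def extFun (n k : ℕ) (l : Fin (n - k + 1) → ℕ) (m : ℕ) : ℕ :=
  if h : 1 ≤ m ∧ m ≤ n - k + 1 then l ⟨m - 1, by omega⟩ else 0

lemma reindex_prod {M : Type*} [CommMonoid M] {n k : ℕ} (hkn : k ≤ n)
    (l : Fin (n - k + 1) → ℕ) (hsupp : ∀ i, l i ≠ 0 → i.1 + 1 ≤ n)
    (g : ℕ → ℕ → M) (hg : ∀ m, g m 0 = 1) :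
    ∏ m ∈ Finset.Icc 1 n, g m (extFun n k l m) = ∏ i : Fin (n - k + 1), g (i.1 + 1) (l i) := by
  have h1 : ∏ m ∈ Finset.Icc 1 n, g m (extFun n k l m)
      = ∏ m ∈ Finset.Icc 1 (n - k + 1), g m (extFun n k l m) := by
    rcases le_or_gt (n - k + 1) n with h | h
    · refine (Finset.prod_subset (Finset.Icc_subset_Icc_right h) fun m hm hnot => ?_).symm
      have hm' : 1 ≤ m ∧ m ≤ n := Finset.mem_Icc.mp hm
      have : ¬ (1 ≤ m ∧ m ≤ n - k + 1) := by
        simp only [Finset.mem_Icc, not_and] at hnot; intro hc; exact absurd (hnot hc.1) (by omega)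
      rw [extFun, dif_neg this, hg]
    · have hk0 : n - k + 1 = n + 1 := by omega
      refine Finset.prod_subset (Finset.Icc_subset_Icc_right (by omega)) fun m hm hnot => ?_
      have hm' : 1 ≤ m ∧ m ≤ n - k + 1 := Finset.mem_Icc.mp hm
      have hmn : m = n + 1 := by
        simp only [Finset.mem_Icc, not_and] at hnot
        omega
      rw [extFun, dif_pos hm']
      have h0 : l ⟨m - 1, by omega⟩ = 0 := by
        by_contra hne
        exact absurd (hsupp _ hne) (by simp; omega)
      rw [h0, hg]
  rw [h1]
  refine (Finset.prod_bij (fun (i : Fin (n - k + 1)) _ => i.1 + 1) ?_ ?_ ?_ ?_).symm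
  · intro i _; simp only [Finset.mem_Icc]; omega
  · intro i _ i' _ h; exact Fin.ext (by omega)
  · intro m hm
    have hm' := Finset.mem_Icc.mp hm
    exact ⟨⟨m - 1, by omega⟩, Finset.mem_univ _, by dsimp only; omega⟩
  · intro i _
    rw [extFun, dif_pos ⟨by omega, (by omega : i.1 + 1 ≤ n - k + 1)⟩]
    congr 1

lemma reindex_sum {n k : ℕ} (hkn : k ≤ n)
    (l : Fin (n - k + 1) → ℕ) (hsupp : ∀ i, l i ≠ 0 → i.1 + 1 ≤ n)
    (g : ℕ → ℕ → ℕ) (hg : ∀ m, g m 0 = 0) :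
    ∑ m ∈ Finset.Icc 1 n, g m (extFun n k l m) = ∑ i : Fin (n - k + 1), g (i.1 + 1) (l i) := by
  have h1 : ∑ m ∈ Finset.Icc 1 n, g m (extFun n k l m)
      = ∑ m ∈ Finset.Icc 1 (n - k + 1), g m (extFun n k l m) := by
    rcases le_or_gt (n - k + 1) n with h | h
    · refine (Finset.sum_subset (Finset.Icc_subset_Icc_right h) fun m hm hnot => ?_).symm
      have hm' : 1 ≤ m ∧ m ≤ n := Finset.mem_Icc.mp hm
      have : ¬ (1 ≤ m ∧ m ≤ n - k + 1) := by
        simp only [Finset.mem_Icc, not_and] at hnot; intro hc; exact absurd (hnot hc.1) (by omega)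
      rw [extFun, dif_neg this, hg]
    · have hk0 : n - k + 1 = n + 1 := by omega
      refine Finset.sum_subset (Finset.Icc_subset_Icc_right (by omega)) fun m hm hnot => ?_
      have hm' : 1 ≤ m ∧ m ≤ n - k + 1 := Finset.mem_Icc.mp hm
      have hmn : m = n + 1 := by
        simp only [Finset.mem_Icc, not_and] at hnot
        omega
      rw [extFun, dif_pos hm']
      have h0 : l ⟨m - 1, by omega⟩ = 0 := by
        by_contra hne
        exact absurd (hsupp _ hne) (by simp; omega)
      rw [h0, hg]
  rw [h1]
  refine (Finset.sum_bij (fun (i : Fin (n - k + 1)) _ => i.1 + 1) ?_ ?_ ?_ ?_).symm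
  · intro i _; simp only [Finset.mem_Icc]; omega
  · intro i _ i' _ h; exact Fin.ext (by omega)
  · intro m hm
    have hm' := Finset.mem_Icc.mp hm
    exact ⟨⟨m - 1, by omega⟩, Finset.mem_univ _, by dsimp only; omega⟩
  · intro i _
    rw [extFun, dif_pos ⟨by omega, (by omega : i.1 + 1 ≤ n - k + 1)⟩]
    congr 1


lemma extFun_shift {n k : ℕ} (hkn : k ≤ n) (b : ℕ → ℕ)
    (hsum : ∑ m ∈ Finset.Icc 1 n, b m = k)
    (hsupp : ∀ m, b m ≠ 0 → m ∈ Finset.Icc 1 n)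
    (hw : ∑ m ∈ Finset.Icc 1 n, m * b m = n) :
    extFun n k (fun i => b (i.1 + 1)) = b := by
  funext m
  rw [extFun]
  split_ifs with h
  · show b (m - 1 + 1) = b m
    congr 1
    omega
  · by_cases hm : m ∈ Finset.Icc 1 n
    · have hm' := Finset.mem_Icc.mp hm
      have hbound : k + (m - 1) * b m ≤ n := by
        have hle : ∑ m' ∈ Finset.Icc 1 n, (b m' + if m' = m then (m - 1) * b m' else 0)
            ≤ ∑ m' ∈ Finset.Icc 1 n, m' * b m' := by
          refine Finset.sum_le_sum fun m' hm'2 => ?_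
          have h1 : 1 ≤ m' := (Finset.mem_Icc.mp hm'2).1
          split_ifs with he
          · have h2 : 1 + (m - 1) = m' := by omega
            have h3 : b m' + (m - 1) * b m' = m' * b m' := by rw [← h2]; ring
            exact h3.le
          · calc b m' = 1 * b m' := (one_mul _).symm
              _ ≤ m' * b m' := Nat.mul_le_mul_right _ h1
        rw [Finset.sum_add_distrib, hsum, Finset.sum_ite_eq' _ m, if_pos hm, hw] at hle
        exact hle
      by_contra hne
      have hb1 : 1 ≤ b m := Nat.one_le_iff_ne_zero.mpr (Ne.symm hne)
      have h3 : m - 1 ≤ (m - 1) * b m := Nat.le_mul_of_pos_right _ hb1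
      omega
    · by_contra hne
      exact hm (hsupp m (Ne.symm hne))

lemma bij_sum (n k : ℕ) (hkn : k ≤ n) (c : ℕ → ℝ) :
    ∑ b ∈ (Finset.piAntidiag (Finset.Icc 1 n) k).filter
        (fun b => ∑ m ∈ Finset.Icc 1 n, m * b m = n),
      (n.factorial : ℝ) / k.factorial * (Nat.multinomial (Finset.Icc 1 n) b) *
        ∏ m ∈ Finset.Icc 1 n, c m ^ b m
    = ∑ l ∈ (Fintype.piFinset fun _ : Fin (n - k + 1) => Finset.range (n + 1)).filter
        (fun l => (∑ i, l i) = k ∧ (∑ i, (i.1 + 1) * l i) = n),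
      (n.factorial : ℝ) / (∏ i, ((l i).factorial : ℝ)) * ∏ i, (c (i.1 + 1)) ^ l i := by
  refine Finset.sum_nbij' (i := fun b => fun i : Fin (n - k + 1) => b (i.1 + 1))
    (j := fun l => extFun n k l) ?_ ?_ ?_ ?_ ?_
  · -- hi : ∀ b ∈ B, ψ b ∈ A
    intro b hb
    obtain ⟨hb', hb3⟩ := Finset.mem_filter.mp hb
    obtain ⟨hb1, hb2⟩ := Finset.mem_piAntidiag.mp hb'
    have hpsupp : ∀ i : Fin (n - k + 1), b (i.1 + 1) ≠ 0 → i.1 + 1 ≤ n :=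
      fun i h => (Finset.mem_Icc.mp (hb2 _ h)).2
    have hinv : extFun n k (fun i => b (i.1 + 1)) = b := extFun_shift hkn b hb1 hb2 hb3
    refine Finset.mem_filter.mpr ⟨?_, ?_, ?_⟩
    · rw [Fintype.mem_piFinset]
      intro i
      rw [Finset.mem_range]
      by_cases h0 : b (i.1 + 1) = 0
      · omega
      · have h5 := Finset.single_le_sum (f := b) (fun m _ => Nat.zero_le _) (hb2 _ h0)
        rw [hb1] at h5
        omega
    · have := reindex_sum hkn (fun i => b (i.1 + 1)) hpsupp (fun _ t => t) (fun _ => rfl)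
      rw [hinv, hb1] at this
      exact this.symm
    · have := reindex_sum hkn (fun i => b (i.1 + 1)) hpsupp (fun m t => m * t)
        (fun m => Nat.mul_zero m)
      rw [hinv, hb3] at this
      exact this.symm
  · -- hj : ∀ l ∈ A, extFun l ∈ B
    intro l hl
    obtain ⟨hl0, hl2, hl3⟩ := Finset.mem_filter.mp hl
    have hsupp : ∀ i : Fin (n - k + 1), l i ≠ 0 → i.1 + 1 ≤ n := by
      intro i h0
      have hle : (i.1 + 1) * l i ≤ n := by
        have h4 := Finset.single_le_sum (f := fun i : Fin (n - k + 1) => (i.1 + 1) * l i)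
          (fun _ _ => Nat.zero_le _) (Finset.mem_univ i)
        rw [hl3] at h4
        exact h4
      have : i.1 + 1 ≤ (i.1 + 1) * l i :=
        Nat.le_mul_of_pos_right _ (Nat.one_le_iff_ne_zero.mpr h0)
      omega
    refine Finset.mem_filter.mpr ⟨Finset.mem_piAntidiag.mpr ⟨?_, ?_⟩, ?_⟩
    · show ∑ m ∈ Finset.Icc 1 n, extFun n k l m = k
      rw [reindex_sum hkn l hsupp (fun _ t => t) (fun _ => rfl), hl2]
    · intro m hm
      unfold extFun at hm
      by_cases h : 1 ≤ m ∧ m ≤ n - k + 1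
      · rw [dif_pos h] at hm
        have h7 : m - 1 + 1 ≤ n := hsupp ⟨m - 1, by omega⟩ hm
        exact Finset.mem_Icc.mpr ⟨h.1, by omega⟩
      · rw [dif_neg h] at hm; exact absurd rfl hm
    · show ∑ m ∈ Finset.Icc 1 n, m * extFun n k l m = n
      rw [reindex_sum hkn l hsupp (fun m t => m * t) (fun m => Nat.mul_zero m), hl3]
  · -- left_inv on B
    intro b hb
    obtain ⟨hb', hb3⟩ := Finset.mem_filter.mp hb
    obtain ⟨hb1, hb2⟩ := Finset.mem_piAntidiag.mp hb'
    exact extFun_shift hkn b hb1 hb2 hb3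
  · -- right_inv on A
    intro l hl
    funext i
    show extFun n k l (i.1 + 1) = l i
    rw [extFun, dif_pos ⟨by omega, (by omega : i.1 + 1 ≤ n - k + 1)⟩]
    congr 1
  · -- terms
    intro b hb
    obtain ⟨hb', hb3⟩ := Finset.mem_filter.mp hb
    obtain ⟨hb1, hb2⟩ := Finset.mem_piAntidiag.mp hb'
    have hpsupp : ∀ i : Fin (n - k + 1), b (i.1 + 1) ≠ 0 → i.1 + 1 ≤ n :=
      fun i h => (Finset.mem_Icc.mp (hb2 _ h)).2
    have hinv : extFun n k (fun i => b (i.1 + 1)) = b := extFun_shift hkn b hb1 hb2 hb3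
    have Pfac : ∏ m ∈ Finset.Icc 1 n, ((b m).factorial : ℝ)
        = ∏ i : Fin (n - k + 1), ((b (i.1 + 1)).factorial : ℝ) := by
      have := reindex_prod hkn (fun i => b (i.1 + 1)) hpsupp
        (fun _ t => (t.factorial : ℝ)) (fun _ => by simp)
      rw [hinv] at this
      exact this
    have Pc : ∏ m ∈ Finset.Icc 1 n, c m ^ b m
        = ∏ i : Fin (n - k + 1), c (i.1 + 1) ^ b (i.1 + 1) := by
      have := reindex_prod hkn (fun i => b (i.1 + 1)) hpsupp
        (fun m t => c m ^ t) (fun _ => by simp)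
      rw [hinv] at this
      exact this
    have hmul : ((∏ m ∈ Finset.Icc 1 n, (b m).factorial) *
        Nat.multinomial (Finset.Icc 1 n) b : ℕ) = k.factorial := by
      rw [Nat.multinomial_spec, hb1]
    have hmulR : (∏ m ∈ Finset.Icc 1 n, ((b m).factorial : ℝ)) *
        (Nat.multinomial (Finset.Icc 1 n) b : ℝ) = (k.factorial : ℝ) := by
      exact_mod_cast congrArg (Nat.cast : ℕ → ℝ) hmul
    have hPne : (∏ m ∈ Finset.Icc 1 n, ((b m).factorial : ℝ)) ≠ 0 :=
      Finset.prod_ne_zero_iff.mpr fun m _ => Nat.cast_ne_zero.mpr (Nat.factorial_ne_zero _)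
    have hkne : (k.factorial : ℝ) ≠ 0 := Nat.cast_ne_zero.mpr (Nat.factorial_ne_zero _)
    rw [← Pfac, ← Pc]
    have hmult : (Nat.multinomial (Finset.Icc 1 n) b : ℝ)
        = (k.factorial : ℝ) / ∏ m ∈ Finset.Icc 1 n, ((b m).factorial : ℝ) := by
      field_simp
      linarith [hmulR]
    rw [hmult]
    field_simp

theorem probDegStirling2_eq_partialBell
    {Ω : Type*} [MeasurableSpace Ω] (μ : Measure Ω) [IsProbabilityMeasure μ]
    (Y : ℕ → Ω → ℝ) (lam : ℝ)
    (hmeas : ∀ j, Measurable (Y j))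
    (hindep : iIndepFun Y μ)
    (hident : ∀ j, IdentDistrib (Y j) (Y 0) μ μ)
    (hmom : ∀ m : ℕ, Integrable (fun ω => |Y 0 ω| ^ m) μ)
    (n k : ℕ) (hkn : k ≤ n) :
    probDegStirling2 μ Y lam n k =
      partialBell n k (fun i => ∫ ω, degFallingFactorial lam i (Y 0 ω) ∂μ) := by
  classical
  have hmomj : ∀ j m, Integrable (fun ω => |Y j ω| ^ m) μ := by
    intro j m
    have h1 : IdentDistrib (fun ω => |Y j ω| ^ m) (fun ω => |Y 0 ω| ^ m) μ μ :=
      (hident j).comp (measurable_abs.pow_const m)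
    exact h1.integrable_iff.mpr (hmom m)
  have hintY : ∀ j m, Integrable (fun ω => degFallingFactorial lam m (Y j ω)) μ :=
    fun j m => degFF_integrable (hmeas j) (hmomj j) lam m
  set a : ℕ → ℝ := fun i => ∫ ω, degFallingFactorial lam i (Y 0 ω) ∂μ with ha
  have haY : ∀ j m, ∫ ω, degFallingFactorial lam m (Y j ω) ∂μ = a m := by
    intro j m
    have h1 : IdentDistrib (fun ω => degFallingFactorial lam m (Y j ω))
        (fun ω => degFallingFactorial lam m (Y 0 ω)) μ μ :=
      (hident j).comp (degFF_measurable lam m)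
    exact h1.integral_eq
  have ha0 : a 0 = 1 := by
    simp [ha, degFF_zero]
  set c : ℕ → ℝ := fun m => a m / m.factorial with hc
  set p : Polynomial ℝ := ∑ m ∈ Finset.range (n + 1), Polynomial.C (c m) * Polynomial.X ^ m
    with hp
  have hpcoeff : ∀ m, m ≤ n → p.coeff m = c m := by
    intro m hm
    rw [hp, Polynomial.finset_sum_coeff]
    have h1 : ∀ b ∈ Finset.range (n + 1),
        (Polynomial.C (c b) * Polynomial.X ^ b).coeff m = if m = b then c b else 0 := by
      intro b _
      rw [Polynomial.coeff_C_mul, Polynomial.coeff_X_pow]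
      split_ifs <;> simp
    rw [Finset.sum_congr rfl h1, Finset.sum_ite_eq, if_pos (Finset.mem_range.mpr (by omega))]
  have hSind : ∀ j, IndepFun (partialSum Y j) (Y j) μ := by
    intro j
    have he : partialSum Y j = ∑ i ∈ Finset.range j, Y i := by
      funext ω; rw [partialSum]; simp
    rw [he]
    exact hindep.indepFun_sum_range_succ hmeas j
  have hcomp : ∀ (j m r : ℕ),
      IndepFun (fun ω => degFallingFactorial lam m (partialSum Y j ω))
        (fun ω => degFallingFactorial lam r (Y j ω)) μ :=
    fun j m r => (hSind j).comp (degFF_measurable lam m) (degFF_measurable lam r)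
  have key : ∀ j, (∀ m, Integrable (fun ω => degFallingFactorial lam m (partialSum Y j ω)) μ) ∧
      ∀ m, m ≤ n → ∫ ω, degFallingFactorial lam m (partialSum Y j ω) ∂μ
        = m.factorial * (p ^ j).coeff m := by
    intro j
    induction j with
    | zero =>
      have h0 : ∀ m, (fun ω => degFallingFactorial lam m (partialSum Y 0 ω))
          = fun _ => degFallingFactorial lam m 0 := by
        intro m; funext ω; simp [partialSum]
      constructor
      · intro m; rw [h0]; exact integrable_const _
      · intro m hm
        rw [h0, integral_const]
        simp only [measure_univ, probReal_univ, one_smul, pow_zero, Polynomial.coeff_one]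
        cases m with
        | zero => simp [degFF_zero]
        | succ m' =>
          have hz : degFallingFactorial lam (m' + 1) (0 : ℝ) = 0 := by
            refine Finset.prod_eq_zero (Finset.mem_range.mpr (Nat.succ_pos m')) ?_
            simp
          rw [hz]
          simp
    | succ j ihj =>
      have hSsucc : ∀ ω : Ω, partialSum Y (j + 1) ω = partialSum Y j ω + Y j ω :=
        fun ω => Finset.sum_range_succ _ _
      have hexp : ∀ (m : ℕ) (ω : Ω), degFallingFactorial lam m (partialSum Y (j + 1) ω)
          = ∑ ij ∈ Finset.HasAntidiagonal.antidiagonal m, (m.choose ij.1 : ℝ) *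
            (degFallingFactorial lam ij.1 (partialSum Y j ω) *
              degFallingFactorial lam ij.2 (Y j ω)) := by
        intro m ω; rw [hSsucc, degFF_add]
      have hprod : ∀ (m r : ℕ), Integrable (fun ω =>
          degFallingFactorial lam m (partialSum Y j ω) *
            degFallingFactorial lam r (Y j ω)) μ :=
        fun m r => (hcomp j m r).integrable_mul (ihj.1 m) (hintY j r)
      have hint : ∀ m, Integrable
          (fun ω => degFallingFactorial lam m (partialSum Y (j + 1) ω)) μ := by
        intro m
        rw [show (fun ω => degFallingFactorial lam m (partialSum Y (j + 1) ω))
            = fun ω => ∑ ij ∈ Finset.HasAntidiagonal.antidiagonal m, (m.choose ij.1 : ℝ) *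
              (degFallingFactorial lam ij.1 (partialSum Y j ω) *
                degFallingFactorial lam ij.2 (Y j ω)) from funext (hexp m)]
        exact integrable_finset_sum _ fun ij _ => (hprod ij.1 ij.2).const_mul _
      refine ⟨hint, ?_⟩
      intro m hm
      calc ∫ ω, degFallingFactorial lam m (partialSum Y (j + 1) ω) ∂μ
          = ∫ ω, ∑ ij ∈ Finset.HasAntidiagonal.antidiagonal m, (m.choose ij.1 : ℝ) *
              (degFallingFactorial lam ij.1 (partialSum Y j ω) *
                degFallingFactorial lam ij.2 (Y j ω)) ∂μ := by
            congr 1; funext ω; exact hexp m ω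
        _ = ∑ ij ∈ Finset.HasAntidiagonal.antidiagonal m, ∫ ω, (m.choose ij.1 : ℝ) *
              (degFallingFactorial lam ij.1 (partialSum Y j ω) *
                degFallingFactorial lam ij.2 (Y j ω)) ∂μ :=
            integral_finset_sum _ fun ij _ => (hprod ij.1 ij.2).const_mul _
        _ = ∑ ij ∈ Finset.HasAntidiagonal.antidiagonal m, (m.choose ij.1 : ℝ) *
              ((∫ ω, degFallingFactorial lam ij.1 (partialSum Y j ω) ∂μ) *
                ∫ ω, degFallingFactorial lam ij.2 (Y j ω) ∂μ) := by
            refine Finset.sum_congr rfl fun ij _ => ?_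
            rw [integral_const_mul]
            congr 1
            exact (hcomp j ij.1 ij.2).integral_mul_eq_mul_integral (ihj.1 ij.1).aestronglyMeasurable (hintY j ij.2).aestronglyMeasurable
        _ = m.factorial * (p ^ (j + 1)).coeff m := ?_
      rw [pow_succ, Polynomial.coeff_mul, Finset.mul_sum]
      refine Finset.sum_congr rfl fun ij hij => ?_
      have hij' : ij.1 + ij.2 = m := Finset.HasAntidiagonal.mem_antidiagonal.mp hij
      rw [ihj.2 ij.1 (by omega), haY j ij.2, hpcoeff ij.2 (by omega), hc]
      have hfac := Nat.choose_mul_factorial_mul_factorial (show ij.1 ≤ m by omega)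
      rw [show m - ij.1 = ij.2 by omega] at hfac
      have hfacR : (m.choose ij.1 : ℝ) * ij.1.factorial * ij.2.factorial = m.factorial := by
        exact_mod_cast hfac
      have h2ne : (ij.2.factorial : ℝ) ≠ 0 := Nat.cast_ne_zero.mpr (Nat.factorial_ne_zero _)
      field_simp
      linear_combination ((p ^ j).coeff ij.1) * (a ij.2) * hfacR
  have hLHS : probDegStirling2 μ Y lam n k
      = (n.factorial : ℝ) / (k.factorial : ℝ) * ((p - 1) ^ k).coeff n := by
    rw [probDegStirling2]
    have h1 : ∀ j ∈ Finset.range (k + 1),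
        (-1 : ℝ) ^ (k - j) * (k.choose j) *
          ∫ ω, degFallingFactorial lam n (partialSum Y j ω) ∂μ
        = (n.factorial : ℝ) * ((p ^ j).coeff n * ((-1 : ℝ) ^ (k - j) * (k.choose j))) := by
      intro j _
      rw [(key j).2 n le_rfl]
      ring
    rw [Finset.sum_congr rfl h1, ← Finset.mul_sum]
    have hbin : ((p - 1) ^ k).coeff n
        = ∑ j ∈ Finset.range (k + 1), (p ^ j).coeff n * ((-1 : ℝ) ^ (k - j) * (k.choose j)) := by
      have hb : (p - 1) ^ k = ∑ j ∈ Finset.range (k + 1),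
          p ^ j * Polynomial.C ((-1 : ℝ) ^ (k - j) * (k.choose j)) := by
        rw [sub_eq_add_neg, add_pow]
        refine Finset.sum_congr rfl fun j _ => ?_
        rw [map_mul, map_pow, map_neg, map_one, Polynomial.C_eq_natCast]
        ring
      rw [hb, Polynomial.finset_sum_coeff]
      refine Finset.sum_congr rfl fun j _ => ?_
      rw [Polynomial.coeff_mul_C]
    rw [hbin]
    ring
  rw [hLHS]
  have hq : p - 1 = ∑ m ∈ Finset.Icc 1 n, Polynomial.C (c m) * Polynomial.X ^ m := by
    have hr : Finset.range (n + 1) = insert 0 (Finset.Icc 1 n) := by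
      ext m; simp only [Finset.mem_range, Finset.mem_insert, Finset.mem_Icc]; omega
    have hc0 : c 0 = 1 := by rw [hc]; simp [ha0]
    rw [hp, hr, Finset.sum_insert (by simp), hc0]
    simp
  have hcoeff : ((p - 1) ^ k).coeff n
      = ∑ b ∈ (Finset.piAntidiag (Finset.Icc 1 n) k).filter
          (fun b => ∑ m ∈ Finset.Icc 1 n, m * b m = n),
        (Nat.multinomial (Finset.Icc 1 n) b : ℝ) * ∏ m ∈ Finset.Icc 1 n, c m ^ b m := by
    rw [hq, Finset.sum_pow_eq_sum_piAntidiag, Polynomial.finset_sum_coeff, Finset.sum_filter]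
    refine Finset.sum_congr rfl fun b _ => ?_
    have hterm : ∏ m ∈ Finset.Icc 1 n, (Polynomial.C (c m) * Polynomial.X ^ m) ^ b m
        = Polynomial.C (∏ m ∈ Finset.Icc 1 n, c m ^ b m) *
            Polynomial.X ^ (∑ m ∈ Finset.Icc 1 n, m * b m) := by
      calc ∏ m ∈ Finset.Icc 1 n, (Polynomial.C (c m) * Polynomial.X ^ m) ^ b m
          = ∏ m ∈ Finset.Icc 1 n, (Polynomial.C (c m ^ b m) * Polynomial.X ^ (m * b m)) := by
            refine Finset.prod_congr rfl fun m _ => ?_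
            rw [mul_pow, ← map_pow, ← pow_mul]
        _ = (∏ m ∈ Finset.Icc 1 n, Polynomial.C (c m ^ b m)) *
              ∏ m ∈ Finset.Icc 1 n, Polynomial.X ^ (m * b m) := Finset.prod_mul_distrib
        _ = _ := by
            rw [← map_prod, Finset.prod_pow_eq_pow_sum]
    rw [hterm, show ((Nat.multinomial (Finset.Icc 1 n) b : Polynomial ℝ))
        = Polynomial.C ((Nat.multinomial (Finset.Icc 1 n) b : ℝ)) from
          (Polynomial.C_eq_natCast _).symm, ← mul_assoc, ← map_mul,
      Polynomial.coeff_C_mul, Polynomial.coeff_X_pow]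
    by_cases hcase : ∑ m ∈ Finset.Icc 1 n, m * b m = n
    · rw [if_pos hcase, if_pos hcase.symm, mul_one]
    · rw [if_neg hcase, if_neg (fun h => hcase h.symm), mul_zero]
  rw [hcoeff, Finset.mul_sum, partialBell]
  calc ∑ b ∈ (Finset.piAntidiag (Finset.Icc 1 n) k).filter
          (fun b => ∑ m ∈ Finset.Icc 1 n, m * b m = n),
        (n.factorial : ℝ) / (k.factorial : ℝ) *
          ((Nat.multinomial (Finset.Icc 1 n) b : ℝ) * ∏ m ∈ Finset.Icc 1 n, c m ^ b m)
      = ∑ b ∈ (Finset.piAntidiag (Finset.Icc 1 n) k).filter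
          (fun b => ∑ m ∈ Finset.Icc 1 n, m * b m = n),
        (n.factorial : ℝ) / (k.factorial : ℝ) *
          (Nat.multinomial (Finset.Icc 1 n) b : ℝ) * ∏ m ∈ Finset.Icc 1 n, c m ^ b m := by
        refine Finset.sum_congr rfl fun b _ => ?_
        ring
    _ = ∑ l ∈ (Fintype.piFinset fun _ : Fin (n - k + 1) => Finset.range (n + 1)).filter
          (fun l => (∑ i, l i) = k ∧ (∑ i, (i.1 + 1) * l i) = n),
        (n.factorial : ℝ) / (∏ i, ((l i).factorial : ℝ)) * ∏ i, (c (i.1 + 1)) ^ l i :=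
        bij_sum n k hkn c
    _ = ∑ l ∈ (Fintype.piFinset fun _ : Fin (n - k + 1) => Finset.range (n + 1)).filter
          (fun l => (∑ i, l i) = k ∧ (∑ i, (i.1 + 1) * l i) = n),
        (n.factorial : ℝ) / (∏ i, ((l i).factorial : ℝ)) *
          ∏ i, (a (i.1 + 1) / (i.1 + 1).factorial) ^ l i := rfl
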